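/- The map sending a pair of recurrent configurations constant on two given disjoint clusters C_1, C_2 (with values a_1, a_2) to the configuration equal to max{a_1,a_2} on C_1 ∪ C_2 and unchanged elsewhere maps burnable configurations to burnable configurations, and it is at most seven-to-one. Consequently k(n,4;σ with edge e closed) ≤ 7 · k(n,4;σ with edge e open), where k counts recurrent configurations constant on the clusters of the bond configuration σ and equal to 4 on the cluster of the boundary. -/

import Mathlib

/-!
Pointwise raising heights can only shrink each step of the burning algorithm, so burnability is
preserved by raising, in particular by merging two clusters onto the maximum of their values. A
preimage of the merged configuration is determined by its two cluster values `(a₁, a₂) ∈ [1,4]²`,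
which must satisfy `max a₁ a₂ = m` for the merged value `m`: at most `2m - 1 ≤ 7` choices.
Merging the two clusters at the ends of a closed edge `e` yields a configuration that is constant
on the clusters of the bond configuration with `e` opened, whence the bound on `k(n,4;σ)`.
-/

open scoped Classical

/-- Lattice sites of `ℤ²`. -/
abbrev Site := ℤ × ℤ

/-- Nearest-neighbor adjacency on `ℤ²`. -/
def adjacent (x y : Site) : Prop :=
  (x.1 - y.1).natAbs + (x.2 - y.2).natAbs = 1

instance (x y : Site) : Decidable (adjacent x y) :=
  inferInstanceAs (Decidable (_ = 1))

/-- The four nearest neighbors of a site. -/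
def nbhd (x : Site) : Finset Site :=
  {(x.1 + 1, x.2), (x.1 - 1, x.2), (x.1, x.2 + 1), (x.1, x.2 - 1)}

/-- Number of neighbors of `x` inside `A`. -/
def nbrs (A : Finset Site) (x : Site) : ℕ :=
  (A.filter fun y => adjacent x y).card

/-- One step of the burning algorithm: remove every site whose height
exceeds its number of remaining neighbors. -/
def burnStep (η : Site → ℕ) (A : Finset Site) : Finset Site :=
  A.filter fun x => η x ≤ nbrs A x

/-- A configuration is burnable (recurrent) on `V` iff iterating the burning
step starting from `V` eventually removes all sites. -/
def Burnable (V : Finset Site) (η : Site → ℕ) : Prop :=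
  ∃ k, (burnStep η)^[k] V = ∅

/-- The square `[-n,n]² ∩ ℤ²`. -/
noncomputable def box (n : ℕ) : Finset Site :=
  Finset.Icc (-(n : ℤ)) n ×ˢ Finset.Icc (-(n : ℤ)) n

/-- Exterior nearest-neighbor boundary of `V`. -/
def extBoundary (V : Finset Site) : Finset Site :=
  (V.biUnion nbhd) \ V

/-- `V ∪ ∂V`. -/
def closureV (V : Finset Site) : Finset Site := V ∪ extBoundary V

/-- `x` and `y` are connected by a nearest-neighbor path inside `S`. -/
def ConnIn (S : Set Site) (x y : Site) : Prop :=
  Relation.ReflTransGen (fun u v => adjacent u v ∧ u ∈ S ∧ v ∈ S) x y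

/-- A finite subset of `ℤ²` is simply connected: it is connected and its
complement is connected. -/
def SimplyConnected (V : Finset Site) : Prop :=
  (∀ x ∈ V, ∀ y ∈ V, ConnIn (↑V) x y) ∧
  (∀ x y : Site, x ∉ V → y ∉ V → ConnIn {z | z ∉ V} x y)

/-- Height configurations on `box n`: value `v : Fin 4` encodes height `v+1`. -/
abbrev Cfg (n : ℕ) := {x : Site // x ∈ box n} → Fin 4

/-- Extension of a configuration on `box n` to all of `ℤ²`, with boundary
height `a` outside the box. -/
noncomputable def extCfg (n : ℕ) (a : ℕ) (η : Cfg n) : Site → ℕ :=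
  fun x => if h : x ∈ box n then (η ⟨x, h⟩ : ℕ) + 1 else a

/-- Number of configurations on `box n` satisfying `P` (counting measure). -/
noncomputable def cnt (n : ℕ) (P : Cfg n → Prop) : ℕ :=
  (Finset.univ.filter P).card

/-- Canonically oriented nearest-neighbor edge (pointing right or up). -/
def canonEdge (e : Site × Site) : Prop :=
  e.2 = (e.1.1 + 1, e.1.2) ∨ e.2 = (e.1.1, e.1.2 + 1)

instance (e : Site × Site) : Decidable (canonEdge e) :=
  inferInstanceAs (Decidable (_ ∨ _))

/-- The edge set `B`: nearest-neighbor bonds with at least one endpoint in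
`box n` (endpoints in `box n ∪ ∂(box n)`). -/
noncomputable def bonds (n : ℕ) : Finset (Site × Site) :=
  ((closureV (box n)) ×ˢ (closureV (box n))).filter
    fun e => canonEdge e ∧ (e.1 ∈ box n ∨ e.2 ∈ box n)

/-- Bond configurations on the edge set `B`. -/
abbrev BondCfg (n : ℕ) := {e : Site × Site // e ∈ bonds n} → Bool

/-- One step of connectivity: an open bond, or the wiring of the boundary
(all boundary sites belong to one cluster). -/
def wiredAdj (n : ℕ) (σ : BondCfg n) (x y : Site) : Prop :=
  (∃ h : (x, y) ∈ bonds n, σ ⟨(x, y), h⟩ = true) ∨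
  (∃ h : (y, x) ∈ bonds n, σ ⟨(y, x), h⟩ = true) ∨
  (x ∈ extBoundary (box n) ∧ y ∈ extBoundary (box n))

/-- `x` and `y` lie in the same cluster of `σ` (boundary wired). -/
def wiredConn (n : ℕ) (σ : BondCfg n) (x y : Site) : Prop :=
  Relation.ReflTransGen (wiredAdj n σ) x y

/-- `η` (with boundary height `a`) is constant on the clusters of `σ`. -/
def ConstOnClusters (n : ℕ) (a : ℕ) (σ : BondCfg n) (η : Cfg n) : Prop :=
  ∀ x y, wiredConn n σ x y → extCfg n a η x = extCfg n a η y

/-- `k(n,a;σ)`: the number of recurrent configurations constant on the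
clusters of `σ` and equal to `a` on the cluster of the boundary. -/
noncomputable def kcount (n : ℕ) (a : ℕ) (σ : BondCfg n) : ℕ :=
  (Finset.univ.filter fun η : Cfg n =>
    Burnable (box n) (extCfg n a η) ∧ ConstOnClusters n a σ η).card

section MergingMap

open Finset hiding box
open Function

theorem burnStep_mono (η : Site → ℕ) : Monotone (burnStep η) := fun A B h x hx => by
  simp only [burnStep, mem_filter] at hx ⊢
  exact ⟨h hx.1, hx.2.trans (card_le_card (filter_subset_filter _ h))⟩

theorem burnStep_antitone : Antitone burnStep := fun η η' h A x hx => by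
  simp only [burnStep, mem_filter] at hx ⊢
  exact ⟨hx.1, (h x).trans hx.2⟩

theorem Burnable.mono {V : Finset Site} {η η' : Site → ℕ} (h : η ≤ η') (hη : Burnable V η) :
    Burnable V η' := by
  obtain ⟨k, hk⟩ := hη
  exact ⟨k, subset_empty.1 <|
    hk ▸ (burnStep_mono η').iterate_le_of_le (burnStep_antitone h) k V⟩

def merge (R : Site → Prop) [DecidablePred R] (u v : Site) (h : Site → ℕ) : Site → ℕ :=
  fun x => if R x then max (h u) (h v) else h x

theorem le_merge {R : Site → Prop} [DecidablePred R] {u v : Site} {h : Site → ℕ}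
    (hR : ∀ x, R x → h x = h u ∨ h x = h v) : h ≤ merge R u v h := by
  intro x
  unfold merge
  split_ifs with hx
  · rcases hR x hx with hxu | hxv
    · rw [hxu]; exact le_max_left _ _
    · rw [hxv]; exact le_max_right _ _
  · exact le_rfl

theorem extCfg_mem_Icc {n a : ℕ} (ha : a ∈ Icc 1 4) (η : Cfg n) (x : Site) :
    extCfg n a η x ∈ Icc 1 4 := by
  unfold extCfg
  split_ifs with hx
  · have := (η ⟨x, hx⟩).isLt
    simp only [mem_Icc]
    omega
  · exact ha

theorem extCfg_injective (n a : ℕ) : Injective (extCfg n a) := by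
  intro η η' h
  funext x
  have hx := congrFun h x
  simp only [extCfg, dif_pos x.2, Nat.add_right_cancel_iff] at hx
  exact Fin.ext hx

def cfgOfHeights (n : ℕ) (h : Site → ℕ) : Cfg n := fun x => Fin.ofNat 4 (h x - 1)

theorem extCfg_cfgOfHeights {n a : ℕ} {h : Site → ℕ} (hbox : ∀ x ∈ box n, h x ∈ Icc 1 4)
    (hout : ∀ x ∉ box n, h x = a) : extCfg n a (cfgOfHeights n h) = h := by
  funext x
  unfold extCfg cfgOfHeights
  split_ifs with hx
  · have := mem_Icc.1 (hbox x hx)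
    rw [Fin.val_ofNat]
    dsimp only
    omega
  · exact (hout x hx).symm

theorem card_max_fiber_le_seven (m : ℕ) : #{p ∈ Icc 1 4 ×ˢ Icc 1 4 | max p.1 p.2 = m} ≤ 7 := by
  rcases le_or_gt m 4 with hm | hm
  · interval_cases m <;> decide
  · rw [filter_false_of_mem fun p hp => ?_, card_empty]
    · omega
    · simp only [mem_product, mem_Icc] at hp
      omega

theorem card_merge_fiber_le_seven {n a : ℕ} (ha : a ∈ Icc 1 4) {s : Finset (Cfg n)}
    {R₁ R₂ : Site → Prop} {u v : Site} (g : Site → ℕ)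
    (h₁ : ∀ η ∈ s, ∀ x, R₁ x → extCfg n a η x = extCfg n a η u)
    (h₂ : ∀ η ∈ s, ∀ x, R₂ x → extCfg n a η x = extCfg n a η v)
    (hout : ∀ η ∈ s, ∀ x, ¬R₁ x → ¬R₂ x → extCfg n a η x = g x)
    (hmax : ∀ η ∈ s, max (extCfg n a η u) (extCfg n a η v) = g u) : #s ≤ 7 := by
  refine (card_le_card_of_injOn (fun η => (extCfg n a η u, extCfg n a η v)) (fun η hη => ?_)
    (fun η hη η' hη' huv => ?_)).trans (card_max_fiber_le_seven (g u))
  · simp only [coe_filter, Set.mem_ofPred_eq, mem_product]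
    exact ⟨⟨extCfg_mem_Icc ha η u, extCfg_mem_Icc ha η v⟩, hmax η hη⟩
  · simp only [Prod.mk.injEq] at huv
    refine extCfg_injective n a (funext fun x => ?_)
    by_cases hx₁ : R₁ x
    · rw [h₁ η hη x hx₁, h₁ η' hη' x hx₁, huv.1]
    by_cases hx₂ : R₂ x
    · rw [h₂ η hη x hx₂, h₂ η' hη' x hx₂, huv.2]
    · rw [hout η hη x hx₁ hx₂, hout η' hη' x hx₁ hx₂]

section Clusters

variable {n a : ℕ} {σ : BondCfg n} {x y : Site}

theorem wiredAdj_symm (h : wiredAdj n σ x y) : wiredAdj n σ y x := by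
  rcases h with h | h | ⟨hx, hy⟩
  exacts [Or.inr (Or.inl h), Or.inl h, Or.inr (Or.inr ⟨hy, hx⟩)]

theorem wiredConn_iff_of_wiredAdj (u : Site) (h : wiredAdj n σ x y) :
    wiredConn n σ u x ↔ wiredConn n σ u y :=
  ⟨fun hx => hx.tail h, fun hy => hy.tail (wiredAdj_symm h)⟩

theorem constOnClusters_of_wiredAdj {η : Cfg n}
    (h : ∀ x y, wiredAdj n σ x y → extCfg n a η x = extCfg n a η y) :
    ConstOnClusters n a σ η := by
  intro x y hxy
  induction hxy with
  | refl => rfl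
  | tail _ hyz ih => exact ih.trans (h _ _ hyz)

theorem wiredAdj_update_true {e : {e : Site × Site // e ∈ bonds n}}
    (h : wiredAdj n (update σ e true) x y) : wiredAdj n σ x y ∨ (x, y) = e.1 ∨ (y, x) = e.1 := by
  rcases h with ⟨hb, h⟩ | ⟨hb, h⟩ | hbd
  · by_cases he : ⟨(x, y), hb⟩ = e
    · exact Or.inr (Or.inl (congrArg Subtype.val he))
    · rw [update_of_ne he] at h
      exact Or.inl (Or.inl ⟨hb, h⟩)
  · by_cases he : ⟨(y, x), hb⟩ = e
    · exact Or.inr (Or.inr (congrArg Subtype.val he))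
    · rw [update_of_ne he] at h
      exact Or.inl (Or.inr (Or.inl ⟨hb, h⟩))
  · exact Or.inl (Or.inr (Or.inr hbd))

end Clusters

section MergeEndClusters

variable {n : ℕ} (σ : BondCfg n) (e : {e : Site × Site // e ∈ bonds n})

def endClusters (x : Site) : Prop := wiredConn n σ e.1.1 x ∨ wiredConn n σ e.1.2 x

noncomputable def mergeEndClusters (η : Cfg n) : Cfg n :=
  cfgOfHeights n (merge (endClusters σ e) e.1.1 e.1.2 (extCfg n 4 η))

variable {σ e} {η : Cfg n}

theorem endClusters_of_edge {x y : Site} (h : (x, y) = e.1) :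
    endClusters σ e x ∧ endClusters σ e y := by
  obtain ⟨⟨u, v⟩, he⟩ := e
  obtain ⟨rfl, rfl⟩ := Prod.mk.inj h
  exact ⟨Or.inl .refl, Or.inr .refl⟩

theorem le_merge_endClusters (hη : ConstOnClusters n 4 σ η) :
    extCfg n 4 η ≤ merge (endClusters σ e) e.1.1 e.1.2 (extCfg n 4 η) :=
  le_merge fun _ hx => hx.imp (fun h => (hη _ _ h).symm) (fun h => (hη _ _ h).symm)

/-- Off the box the merged height is `4`, because a merged cluster meeting the boundary already
carries height `4`. -/
theorem extCfg_mergeEndClusters (hη : ConstOnClusters n 4 σ η) :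
    extCfg n 4 (mergeEndClusters σ e η) = merge (endClusters σ e) e.1.1 e.1.2 (extCfg n 4 η) := by
  have hrange : ∀ x, merge (endClusters σ e) e.1.1 e.1.2 (extCfg n 4 η) x ∈ Icc 1 4 := by
    intro x
    have h4 : 4 ∈ Icc 1 4 := by decide
    have hu := mem_Icc.1 (extCfg_mem_Icc h4 η e.1.1)
    have hv := mem_Icc.1 (extCfg_mem_Icc h4 η e.1.2)
    have hx := mem_Icc.1 (extCfg_mem_Icc h4 η x)
    unfold merge
    split_ifs <;> simp only [mem_Icc] <;> omega
  refine extCfg_cfgOfHeights (a := 4) (fun x _ => hrange x) (fun x hx => ?_)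
  have hboundary : extCfg n 4 η x = 4 := dif_neg hx
  exact le_antisymm (mem_Icc.1 (hrange x)).2 (hboundary.symm.trans_le (le_merge_endClusters hη x))

theorem burnable_mergeEndClusters (hη : ConstOnClusters n 4 σ η)
    (hb : Burnable (box n) (extCfg n 4 η)) :
    Burnable (box n) (extCfg n 4 (mergeEndClusters σ e η)) := by
  rw [extCfg_mergeEndClusters hη]
  exact hb.mono (le_merge_endClusters hη)

theorem constOnClusters_mergeEndClusters (hη : ConstOnClusters n 4 σ η) :
    ConstOnClusters n 4 (update σ e true) (mergeEndClusters σ e η) := by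
  refine constOnClusters_of_wiredAdj fun x y hxy => ?_
  rw [extCfg_mergeEndClusters hη]
  unfold merge
  rcases wiredAdj_update_true hxy with h | h | h
  · have hiff : endClusters σ e x ↔ endClusters σ e y :=
      or_congr (wiredConn_iff_of_wiredAdj _ h) (wiredConn_iff_of_wiredAdj _ h)
    by_cases hx : endClusters σ e x
    · rw [if_pos hx, if_pos (hiff.1 hx)]
    · rw [if_neg hx, if_neg (hiff.not.1 hx)]
      exact hη x y (.single h)
  · rw [if_pos (endClusters_of_edge h).1, if_pos (endClusters_of_edge h).2]
  · rw [if_pos (endClusters_of_edge h).2, if_pos (endClusters_of_edge h).1]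

end MergeEndClusters

theorem kcount_update_false_le {n : ℕ} (σ : BondCfg n) (e : {e : Site × Site // e ∈ bonds n}) :
    kcount n 4 (update σ e false) ≤ 7 * kcount n 4 (update σ e true) := by
  set σ₀ := update σ e false
  have hopen : update σ₀ e true = update σ e true := update_idem _ _ _
  unfold kcount
  refine (card_le_mul_card_image (f := mergeEndClusters σ₀ e) _ 7 fun ξ _ => ?_).trans
    (Nat.mul_le_mul_left 7 (card_le_card fun ξ hξ => ?_))
  · rw [filter_filter]
    refine card_merge_fiber_le_seven (a := 4) (by decide) (R₁ := wiredConn n σ₀ e.1.1)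
      (R₂ := wiredConn n σ₀ e.1.2) (u := e.1.1) (v := e.1.2) (extCfg n 4 ξ)
      (fun η hη x hx => ?_) (fun η hη x hx => ?_) (fun η hη x hx₁ hx₂ => ?_) (fun η hη => ?_)
      <;> simp only [mem_filter, mem_univ, true_and] at hη
    · exact (hη.1.2 _ _ hx).symm
    · exact (hη.1.2 _ _ hx).symm
    · rw [← hη.2, extCfg_mergeEndClusters hη.1.2, merge,
        if_neg (show ¬endClusters σ₀ e x from not_or.2 ⟨hx₁, hx₂⟩)]
    · rw [← hη.2, extCfg_mergeEndClusters hη.1.2, merge,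
        if_pos (show endClusters σ₀ e e.1.1 from Or.inl .refl)]
  · obtain ⟨η, hη, rfl⟩ := mem_image.1 hξ
    simp only [mem_filter, mem_univ, true_and] at hη ⊢
    exact ⟨burnable_mergeEndClusters hη.2 hη.1, hopen ▸ constOnClusters_mergeEndClusters hη.2⟩

end MergingMap

theorem merging_map_seven_to_one_general
    (n : ℕ) (C₁ C₂ : Finset Site)
    (c₁ c₂ : Site) (hc₁ : c₁ ∈ C₁) :
    -- the map sends burnable configurations to burnable configurations
    (∀ η : Site → ℕ,
      (∀ x ∈ C₁, η x = η c₁) → (∀ x ∈ C₂, η x = η c₂) →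
      Burnable (box n) η →
      Burnable (box n)
        (fun x => if x ∈ C₁ ∪ C₂ then max (η c₁) (η c₂) else η x)) ∧
    -- the map is at most seven-to-one
    (∀ ξ : Cfg n,
      (Finset.univ.filter fun η : Cfg n =>
        (∀ x ∈ C₁, extCfg n 4 η x = extCfg n 4 η c₁) ∧
        (∀ x ∈ C₂, extCfg n 4 η x = extCfg n 4 η c₂) ∧
        (∀ x : Site, extCfg n 4 ξ x =
          if x ∈ C₁ ∪ C₂ then max (extCfg n 4 η c₁) (extCfg n 4 η c₂)
          else extCfg n 4 η x)).card ≤ 7) ∧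
    -- consequence for the cluster counts
    (∀ (σ : BondCfg n) (e : {e : Site × Site // e ∈ bonds n}),
      kcount n 4 (Function.update σ e false) ≤
        7 * kcount n 4 (Function.update σ e true)) := by
  refine ⟨fun η h₁ h₂ hb => hb.mono (le_merge (R := (· ∈ C₁ ∪ C₂)) fun x hx =>
    (Finset.mem_union.1 hx).imp (h₁ x) (h₂ x)), fun ξ => ?_, kcount_update_false_le⟩
  refine card_merge_fiber_le_seven (a := 4) (by decide) (R₁ := (· ∈ C₁)) (R₂ := (· ∈ C₂))
    (u := c₁) (v := c₂) (extCfg n 4 ξ) (fun η hη => (Finset.mem_filter.1 hη).2.1)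
    (fun η hη => (Finset.mem_filter.1 hη).2.2.1) (fun η hη x hx₁ hx₂ => ?_) (fun η hη => ?_)
  · rw [(Finset.mem_filter.1 hη).2.2.2 x, if_neg (by simp [hx₁, hx₂])]
  · rw [(Finset.mem_filter.1 hη).2.2.2 c₁, if_pos (Finset.mem_union_left _ hc₁)]

/-- The merging map on two clusters: replace the (constant) values on
`C₁ ∪ C₂` by the maximum of the two cluster values; it preserves burnability,
is at most seven-to-one, and therefore
`k(n,4;σ with e closed) ≤ 7 k(n,4;σ with e open)`. -/
theorem merging_map_seven_to_one
    (n : ℕ) (C₁ C₂ : Finset Site) (hdis : Disjoint C₁ C₂)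
    (hC₁ : C₁ ⊆ box n) (hC₂ : C₂ ⊆ box n)
    (c₁ c₂ : Site) (hc₁ : c₁ ∈ C₁) (hc₂ : c₂ ∈ C₂) :
    -- the map sends burnable configurations to burnable configurations
    (∀ η : Site → ℕ,
      (∀ x ∈ C₁, η x = η c₁) → (∀ x ∈ C₂, η x = η c₂) →
      Burnable (box n) η →
      Burnable (box n)
        (fun x => if x ∈ C₁ ∪ C₂ then max (η c₁) (η c₂) else η x)) ∧
    -- the map is at most seven-to-one
    (∀ ξ : Cfg n,
      (Finset.univ.filter fun η : Cfg n =>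
        (∀ x ∈ C₁, extCfg n 4 η x = extCfg n 4 η c₁) ∧
        (∀ x ∈ C₂, extCfg n 4 η x = extCfg n 4 η c₂) ∧
        (∀ x : Site, extCfg n 4 ξ x =
          if x ∈ C₁ ∪ C₂ then max (extCfg n 4 η c₁) (extCfg n 4 η c₂)
          else extCfg n 4 η x)).card ≤ 7) ∧
    -- consequence for the cluster counts
    (∀ (σ : BondCfg n) (e : {e : Site × Site // e ∈ bonds n}),
      kcount n 4 (Function.update σ e false) ≤
        7 * kcount n 4 (Function.update σ e true)) :=
  merging_map_seven_to_one_general n C₁ C₂ c₁ c₂ hc₁
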